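/- arXiv:2112.11884 — 4 statements merged into one kernel-verified Lean document; each statement's English description precedes it below -/
import Mathlib

section
/- Let n > 3 be an odd integer, let 0 < q < 1, and for k = 0, 1, …, (n−1)/2 define u_k := q^{k²/n} · f(q^{n−2k}, q^{n+2k}), where f(a,b) := ∑_{m∈ℤ} a^{m(m+1)/2} b^{m(m−1)/2}. Then u_0 > u_1 > u_2 > ⋯ > u_{(n−1)/2} > 0. -/
open Real

/-- Ramanujan's general theta function `f(a,b) = ∑_{m ∈ ℤ} a^(m(m+1)/2) b^(m(m-1)/2)`. -/
noncomputable def ramF (a b : ℝ) : ℝ :=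
  ∑' m : ℤ, a ^ (m * (m + 1) / 2) * b ^ (m * (m - 1) / 2)

/-!
Completing the square gives `u_k = ∑_m exp (-c (m - k/n)²)` with `c = -n log q`, a periodised
Gaussian. Poisson summation turns it into `√(π/c) Θ(R, 2πk/n)`, where
`Θ(R, θ) = ∑_m R^(m²) cos (m θ)` and `R = exp (-π²/c) ∈ (0, 1)`. By Jacobi's triple product,
`Θ(R, θ) = (R²; R²)_∞ ∏_j (1 + 2 R^(2j+1) cos θ + R^(4j+2))`, a product of positive factors that
decrease strictly in `θ` on `[0, π]`; hence `Θ(R, ·)` decreases strictly there, and the angles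
`2πk/n` with `2k < n` lie in `[0, π]`. The triple product itself is the limit of its finite form
`∏_{j<N} (⋯) = ∑_m R^(m²) [2N, N+m]_{R²} cos (m θ)`, a consequence of the Pascal-type recurrence
satisfied by the coefficients.
-/

open Filter Topology

namespace RamanujanTheta

variable {R : ℝ}

noncomputable def qPoch (R : ℝ) (k : ℕ) : ℝ := ∏ j ∈ Finset.range k, (1 - R ^ (2 * (j + 1)))

/-- `1 / (R²; R²)_k`, extended by `0` to `k < 0` so that `qPochInv_sub_one` holds on all of `ℤ`. -/
noncomputable def qPochInv (R : ℝ) (k : ℤ) : ℝ := if k < 0 then 0 else (qPoch R k.toNat)⁻¹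

lemma one_sub_pow_pos (hR₀ : 0 < R) (hR₁ : R < 1) {j : ℕ} (hj : j ≠ 0) : 0 < 1 - R ^ j := by
  linarith [pow_lt_one₀ hR₀.le hR₁ hj]

lemma qPoch_pos (hR₀ : 0 < R) (hR₁ : R < 1) (k : ℕ) : 0 < qPoch R k :=
  Finset.prod_pos fun _ _ => one_sub_pow_pos hR₀ hR₁ (by omega)

lemma qPoch_antitone (hR₀ : 0 < R) (hR₁ : R < 1) : Antitone (qPoch R) :=
  antitone_nat_of_succ_le fun k => by
    rw [qPoch, Finset.prod_range_succ]
    exact mul_le_of_le_one_right (qPoch_pos hR₀ hR₁ k).le (by linarith [pow_pos hR₀ (2 * (k + 1))])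

lemma qPochInv_nonneg (hR₀ : 0 < R) (hR₁ : R < 1) (k : ℤ) : 0 ≤ qPochInv R k := by
  unfold qPochInv
  split_ifs
  exacts [le_rfl, inv_nonneg.mpr (qPoch_pos hR₀ hR₁ _).le]

lemma qPochInv_sub_one (hR₀ : 0 < R) (hR₁ : R < 1) (k : ℤ) :
    qPochInv R (k - 1) = (1 - R ^ (2 * k)) * qPochInv R k := by
  rcases lt_trichotomy k 0 with hk | rfl | hk
  · simp [qPochInv, hk, show k - 1 < 0 by omega]
  · simp [qPochInv]
  · obtain ⟨j, rfl⟩ : ∃ j : ℕ, k = j + 1 := ⟨k.toNat - 1, by omega⟩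
    have hpos := one_sub_pow_pos hR₀ hR₁ (j := 2 * (j + 1)) (by omega)
    simp only [qPochInv, add_sub_cancel_right, show ¬ ((j : ℤ) < 0) by omega,
      show ¬ ((j : ℤ) + 1 < 0) by omega, if_false, Int.toNat_natCast,
      show ((j : ℤ) + 1).toNat = j + 1 by omega, qPoch, Finset.prod_range_succ,
      show (2 * ((j : ℤ) + 1)) = ((2 * (j + 1) : ℕ) : ℤ) by push_cast; ring, zpow_natCast]
    field_simp

noncomputable def qPochLim (R : ℝ) : ℝ := ∏' j : ℕ, (1 - R ^ (2 * (j + 1)))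

lemma summable_pow_two_mul_succ (hR₀ : 0 < R) (hR₁ : R < 1) :
    Summable fun j : ℕ => R ^ (2 * (j + 1)) := by
  have h := (summable_geometric_of_lt_one (sq_nonneg R) (by nlinarith : R ^ 2 < 1)).mul_right
    (R ^ 2)
  exact h.congr fun j => by rw [← pow_succ, ← pow_mul]

lemma tendsto_qPoch (hR₀ : 0 < R) (hR₁ : R < 1) : Tendsto (qPoch R) atTop (𝓝 (qPochLim R)) := by
  have := Real.multipliable_one_add_of_summable (summable_pow_two_mul_succ hR₀ hR₁).neg
  simp only [← sub_eq_add_neg] at this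
  exact this.tendsto_prod_tprod_nat

lemma qPochLim_pos (hR₀ : 0 < R) (hR₁ : R < 1) : 0 < qPochLim R := by
  refine lt_of_le_of_ne (ge_of_tendsto' (tendsto_qPoch hR₀ hR₁) fun k => (qPoch_pos hR₀ hR₁ k).le)
    (Ne.symm ?_)
  have := tprod_one_add_ne_zero_of_summable (f := fun j : ℕ => -R ^ (2 * (j + 1)))
    (fun j => by linarith [one_sub_pow_pos hR₀ hR₁ (j := 2 * (j + 1)) (by omega)])
    (by simpa using (summable_pow_two_mul_succ hR₀ hR₁).abs)
  simpa [qPochLim, ← sub_eq_add_neg] using this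

lemma qPochLim_le_qPoch (hR₀ : 0 < R) (hR₁ : R < 1) (k : ℕ) : qPochLim R ≤ qPoch R k :=
  (qPoch_antitone hR₀ hR₁).le_of_tendsto (tendsto_qPoch hR₀ hR₁) k

lemma qPochInv_le (hR₀ : 0 < R) (hR₁ : R < 1) (k : ℤ) : qPochInv R k ≤ (qPochLim R)⁻¹ := by
  unfold qPochInv
  split_ifs
  · exact (inv_pos.mpr (qPochLim_pos hR₀ hR₁)).le
  · exact inv_anti₀ (qPochLim_pos hR₀ hR₁) (qPochLim_le_qPoch hR₀ hR₁ _)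

lemma tendsto_qPochInv (hR₀ : 0 < R) (hR₁ : R < 1) :
    Tendsto (qPochInv R) atTop (𝓝 (qPochLim R)⁻¹) := by
  have hToNat : Tendsto Int.toNat atTop atTop :=
    tendsto_atTop_atTop.mpr fun b => ⟨b, fun k hk => by omega⟩
  have h := ((tendsto_qPoch hR₀ hR₁).comp hToNat).inv₀ (qPochLim_pos hR₀ hR₁).ne'
  refine h.congr' ?_
  filter_upwards [eventually_ge_atTop 0] with k hk
  simp [qPochInv, not_lt.mpr hk]

/-- `R^(m²)` times the Gaussian binomial coefficient `[2N, N+m]` in base `R²`. -/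
noncomputable def tripleCoeff (R : ℝ) (N : ℕ) (m : ℤ) : ℝ :=
  qPoch R (2 * N) * R ^ (m ^ 2) * qPochInv R (N - m) * qPochInv R (N + m)

lemma qPoch_two_mul_succ (N : ℕ) :
    qPoch R (2 * (N + 1)) = qPoch R (2 * N) * ((1 - R ^ (4 * N + 2)) * (1 - R ^ (4 * N + 4))) := by
  rw [show 2 * (N + 1) = 2 * N + 1 + 1 by ring, qPoch, Finset.prod_range_succ,
    Finset.prod_range_succ, ← qPoch]
  ring_nf

lemma tripleCoeff_succ (hR₀ : 0 < R) (hR₁ : R < 1) (N : ℕ) (m : ℤ) :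
    tripleCoeff R (N + 1) m = (1 + R ^ (4 * N + 2)) * tripleCoeff R N m
      + R ^ (2 * N + 1) * (tripleCoeff R N (m - 1) + tripleCoeff R N (m + 1)) := by
  simp only [tripleCoeff, qPoch_two_mul_succ, Nat.cast_add, Nat.cast_one]
  -- express every `qPochInv` through `qPochInv R (N + 1 ∓ m)`; what is then left is an identity
  -- of Laurent polynomials in `R` and `R ^ m`
  rw [show (N : ℤ) - (m - 1) = N + 1 - m by ring, show (N : ℤ) + (m + 1) = N + 1 + m by ring,
    show (N : ℤ) - m = N + 1 - m - 1 by ring, show (N : ℤ) + m = N + 1 + m - 1 by ring,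
    show (N : ℤ) + (m - 1) = N + 1 + m - 1 - 1 by ring,
    show (N : ℤ) - (m + 1) = N + 1 - m - 1 - 1 by ring]
  simp only [qPochInv_sub_one hR₀ hR₁]
  have hR : R ≠ 0 := hR₀.ne'
  have up (c : ℤ) (a b : ℕ) : R ^ (c + a + b * m) = R ^ c * R ^ a * (R ^ m) ^ b := by
    rw [zpow_add₀ hR, zpow_add₀ hR, mul_comm (b : ℤ) m, zpow_mul, zpow_natCast, zpow_natCast]
  have down (c : ℤ) (a b : ℕ) : R ^ (c + a - b * m) = R ^ c * R ^ a / (R ^ m) ^ b := by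
    rw [zpow_sub₀ hR, zpow_add₀ hR, mul_comm (b : ℤ) m, zpow_mul, zpow_natCast, zpow_natCast]
  rw [show 2 * ((N : ℤ) + 1 - m) = 0 + ((2 * N + 2 : ℕ) : ℤ) - (2 : ℕ) * m by push_cast; ring,
    show 2 * ((N : ℤ) + 1 + m) = 0 + ((2 * N + 2 : ℕ) : ℤ) + (2 : ℕ) * m by push_cast; ring,
    show 2 * ((N : ℤ) + 1 - m - 1) = 0 + ((2 * N : ℕ) : ℤ) - (2 : ℕ) * m by push_cast; ring,
    show 2 * ((N : ℤ) + 1 + m - 1) = 0 + ((2 * N : ℕ) : ℤ) + (2 : ℕ) * m by push_cast; ring,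
    show (m - 1) ^ 2 = m ^ 2 + ((1 : ℕ) : ℤ) - (2 : ℕ) * m by push_cast; ring,
    show (m + 1) ^ 2 = m ^ 2 + ((1 : ℕ) : ℤ) + (2 : ℕ) * m by push_cast; ring,
    up, up, up, down, down, down, zpow_zero]
  field_simp
  ring

lemma tripleCoeff_eq_zero {N : ℕ} {m : ℤ} (h : (N : ℤ) < |m|) : tripleCoeff R N m = 0 := by
  rcases lt_abs.mp h with h | h
  · simp [tripleCoeff, qPochInv, show (N : ℤ) - m < 0 by omega]
  · simp [tripleCoeff, qPochInv, show (N : ℤ) + m < 0 by omega]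

lemma summable_tripleCoeff_mul (N : ℕ) (k : ℤ) (g : ℤ → ℝ) :
    Summable fun m => tripleCoeff R N (m + k) * g m :=
  summable_of_ne_finset_zero (s := Finset.Icc (-N - k) (N - k)) fun m hm => by
    rw [tripleCoeff_eq_zero (by rw [Finset.mem_Icc] at hm; rw [lt_abs]; omega), zero_mul]

/-- `|1 + R^(2j+1) e^(iθ)|²` -/
noncomputable def jacobiFactor (R θ : ℝ) (j : ℕ) : ℝ :=
  1 + 2 * R ^ (2 * j + 1) * cos θ + R ^ (4 * j + 2)

lemma tsum_tripleCoeff_succ_mul_cos (hR₀ : 0 < R) (hR₁ : R < 1) (N : ℕ) (θ : ℝ) :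
    ∑' m : ℤ, tripleCoeff R (N + 1) m * cos (m * θ)
      = jacobiFactor R θ N * ∑' m : ℤ, tripleCoeff R N m * cos (m * θ) := by
  have hs (k : ℤ) (g : ℤ → ℝ) := summable_tripleCoeff_mul (R := R) N k g
  have hs₀ (g : ℤ → ℝ) : Summable fun m => tripleCoeff R N m * g m := by simpa using hs 0 g
  have shift (k : ℤ) : ∑' m : ℤ, tripleCoeff R N (m + k) * cos (m * θ)
      = ∑' m : ℤ, tripleCoeff R N m * cos ((m - k : ℤ) * θ) := by
    rw [← (Equiv.subRight k).tsum_eq]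
    simp
  have hcos (m : ℤ) :
      cos ((m - -1 : ℤ) * θ) + cos ((m - 1 : ℤ) * θ) = 2 * cos θ * cos (m * θ) := by
    push_cast
    rw [sub_neg_eq_add, add_mul, sub_mul, one_mul, cos_add, cos_sub]
    ring
  calc ∑' m : ℤ, tripleCoeff R (N + 1) m * cos (m * θ)
      = ∑' m : ℤ, ((1 + R ^ (4 * N + 2)) * (tripleCoeff R N m * cos (m * θ))
          + R ^ (2 * N + 1) * (tripleCoeff R N (m + -1) * cos (m * θ)
            + tripleCoeff R N (m + 1) * cos (m * θ))) := by
        refine tsum_congr fun m => ?_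
        rw [tripleCoeff_succ hR₀ hR₁, ← sub_eq_add_neg]
        ring
    _ = (1 + R ^ (4 * N + 2)) * ∑' m : ℤ, tripleCoeff R N m * cos (m * θ)
          + R ^ (2 * N + 1) * ∑' m : ℤ, tripleCoeff R N m
            * (cos ((m - -1 : ℤ) * θ) + cos ((m - 1 : ℤ) * θ)) := by
        rw [Summable.tsum_add ((hs₀ _).mul_left _) (((hs _ _).add (hs _ _)).mul_left _),
          tsum_mul_left, tsum_mul_left, Summable.tsum_add (hs _ _) (hs _ _), shift, shift,
          ← Summable.tsum_add (hs₀ _) (hs₀ _)]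
        simp only [mul_add]
    _ = jacobiFactor R θ N * ∑' m : ℤ, tripleCoeff R N m * cos (m * θ) := by
        simp_rw [hcos, mul_left_comm _ (2 * cos θ), tsum_mul_left, jacobiFactor]
        ring

lemma tsum_tripleCoeff_mul_cos (hR₀ : 0 < R) (hR₁ : R < 1) (N : ℕ) (θ : ℝ) :
    ∑' m : ℤ, tripleCoeff R N m * cos (m * θ) = ∏ j ∈ Finset.range N, jacobiFactor R θ j := by
  induction N with
  | zero =>
    rw [tsum_eq_single 0 fun m hm => by
      rw [tripleCoeff_eq_zero (by simpa [abs_pos] using hm), zero_mul]]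
    simp [tripleCoeff, qPoch, qPochInv]
  | succ N ih => rw [tsum_tripleCoeff_succ_mul_cos hR₀ hR₁, ih, Finset.prod_range_succ, mul_comm]

lemma tripleCoeff_nonneg (hR₀ : 0 < R) (hR₁ : R < 1) (N : ℕ) (m : ℤ) : 0 ≤ tripleCoeff R N m :=
  mul_nonneg (mul_nonneg (mul_nonneg (qPoch_pos hR₀ hR₁ _).le (zpow_pos hR₀ _).le)
    (qPochInv_nonneg hR₀ hR₁ _)) (qPochInv_nonneg hR₀ hR₁ _)

lemma tripleCoeff_le (hR₀ : 0 < R) (hR₁ : R < 1) (N : ℕ) (m : ℤ) :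
    tripleCoeff R N m ≤ R ^ (m ^ 2) / qPochLim R := by
  have hL := qPochLim_pos hR₀ hR₁
  by_cases hm : (N : ℤ) < |m|
  · rw [tripleCoeff_eq_zero hm]
    exact div_nonneg (zpow_pos hR₀ _).le hL.le
  obtain ⟨hm₁, hm₂⟩ := abs_le.mp (not_lt.mp hm)
  have hplus : qPoch R (2 * N) * qPochInv R (N + m) ≤ 1 := by
    rw [qPochInv, if_neg (by omega), ← div_eq_mul_inv, div_le_one (qPoch_pos hR₀ hR₁ _)]
    exact qPoch_antitone hR₀ hR₁ (by omega)
  calc tripleCoeff R N m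
      = R ^ (m ^ 2) * (qPoch R (2 * N) * qPochInv R (N + m)) * qPochInv R (N - m) := by
        rw [tripleCoeff]; ring
    _ ≤ R ^ (m ^ 2) * 1 * (qPochLim R)⁻¹ :=
        mul_le_mul (mul_le_mul_of_nonneg_left hplus (zpow_pos hR₀ _).le)
          (qPochInv_le hR₀ hR₁ _) (qPochInv_nonneg hR₀ hR₁ _) (by positivity)
    _ = R ^ (m ^ 2) / qPochLim R := by ring

lemma tendsto_tripleCoeff (hR₀ : 0 < R) (hR₁ : R < 1) (m : ℤ) :
    Tendsto (fun N => tripleCoeff R N m) atTop (𝓝 (R ^ (m ^ 2) / qPochLim R)) := by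
  have hL := (qPochLim_pos hR₀ hR₁).ne'
  have hPoch : Tendsto (fun N : ℕ => qPoch R (2 * N)) atTop (𝓝 (qPochLim R)) :=
    (tendsto_qPoch hR₀ hR₁).comp (tendsto_id.const_mul_atTop' two_pos)
  have hInv (k : ℤ) : Tendsto (fun N : ℕ => qPochInv R (N + k)) atTop (𝓝 (qPochLim R)⁻¹) :=
    (tendsto_qPochInv hR₀ hR₁).comp
      (tendsto_atTop_add_const_right _ k tendsto_natCast_atTop_atTop)
  have h := ((hPoch.mul_const (R ^ (m ^ 2))).mul (hInv (-m))).mul (hInv m)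
  rw [show R ^ (m ^ 2) / qPochLim R
      = qPochLim R * R ^ (m ^ 2) * (qPochLim R)⁻¹ * (qPochLim R)⁻¹ by field_simp]
  exact h.congr fun N => by simp [tripleCoeff, sub_eq_add_neg]

lemma summable_zpow_sq (hR₀ : 0 < R) (hR₁ : R < 1) : Summable fun m : ℤ => R ^ (m ^ 2) := by
  have h : Summable fun n : ℕ => R ^ ((n : ℤ) ^ 2) :=
    (summable_geometric_of_lt_one hR₀.le hR₁).of_nonneg_of_le (fun n => (zpow_pos hR₀ _).le)
      fun n => by
        rw [← zpow_natCast]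
        exact zpow_le_zpow_right_of_le_one₀ hR₀ hR₁.le (by nlinarith)
  exact Summable.of_nat_of_neg (f := fun m : ℤ => R ^ (m ^ 2)) h (by simpa only [neg_sq] using h)

noncomputable def thetaCos (R θ : ℝ) : ℝ := ∑' m : ℤ, R ^ (m ^ 2) * cos (m * θ)

/-- Jacobi's triple product: the finite form `tsum_tripleCoeff_mul_cos` passes to the limit by
dominated convergence, with the bound `tripleCoeff_le`. -/
theorem tendsto_prod_jacobiFactor (hR₀ : 0 < R) (hR₁ : R < 1) (θ : ℝ) :
    Tendsto (fun N => ∏ j ∈ Finset.range N, jacobiFactor R θ j) atTop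
      (𝓝 (thetaCos R θ / qPochLim R)) := by
  simp_rw [← tsum_tripleCoeff_mul_cos hR₀ hR₁, thetaCos, ← tsum_div_const]
  refine tendsto_tsum_of_dominated_convergence (bound := fun m => R ^ (m ^ 2) / qPochLim R)
    ((summable_zpow_sq hR₀ hR₁).div_const _)
    (fun m => ?_) (Eventually.of_forall fun N m => ?_)
  · convert (tendsto_tripleCoeff hR₀ hR₁ m).mul_const (cos (m * θ)) using 2
    ring
  · rw [norm_mul, Real.norm_of_nonneg (tripleCoeff_nonneg hR₀ hR₁ N m)]
    exact (mul_le_of_le_one_right (tripleCoeff_nonneg hR₀ hR₁ N m) (abs_cos_le_one _)).trans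
      (tripleCoeff_le hR₀ hR₁ N m)

lemma summable_exp_neg_mul_sub_sq {c : ℝ} (hc : 0 < c) (x : ℝ) :
    Summable fun n : ℤ => exp (-c * (n - x) ^ 2) :=
  (HurwitzKernelBounds.summable_f_int 0 (-x) (div_pos hc pi_pos)).congr fun n => by
    rw [HurwitzKernelBounds.f_int, pow_zero, one_mul, ← sub_eq_add_neg]
    congr 1
    field_simp

lemma exp_mul_intCast_sq (s : ℝ) (n : ℤ) : exp (s * n ^ 2) = exp s ^ (n ^ 2) := by
  rw [← Real.rpow_intCast, ← Real.exp_mul]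
  push_cast
  rfl

/-- Poisson summation for a shifted Gaussian (Jacobi's imaginary transformation). -/
theorem tsum_exp_neg_mul_sub_sq {c : ℝ} (hc : 0 < c) (x : ℝ) :
    ∑' n : ℤ, exp (-c * (n - x) ^ 2) = √(π / c) * thetaCos (exp (-π ^ 2 / c)) (2 * π * x) := by
  have key := Complex.tsum_exp_neg_quadratic (a := ((π / c : ℝ) : ℂ))
    (by rw [Complex.ofReal_re]; positivity) (Complex.I * x)
  have hlhs (n : ℤ) : Complex.exp (-π * ((π / c : ℝ) : ℂ) * n ^ 2 + 2 * π * (Complex.I * x) * n)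
      = Complex.exp ((-π ^ 2 / c * n ^ 2 : ℝ)) * Complex.exp ((2 * π * x * n : ℝ) * Complex.I) := by
    rw [← Complex.exp_add]
    push_cast
    ring_nf
  have hrhs (n : ℤ) : Complex.exp (-π / ((π / c : ℝ) : ℂ) * (n + Complex.I * (Complex.I * x)) ^ 2)
      = (exp (-c * (n - x) ^ 2) : ℂ) := by
    rw [Complex.ofReal_exp, ← mul_assoc, Complex.I_mul_I]
    push_cast
    field_simp
    ring_nf
  have hsqrt : ((π / c : ℝ) : ℂ) ^ (1 / 2 : ℂ) = (√(π / c) : ℂ) := by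
    rw [Real.sqrt_eq_rpow, Complex.ofReal_cpow (by positivity)]
    norm_num
  simp_rw [hlhs, hrhs, ← Complex.ofReal_tsum, hsqrt] at key
  have hsum : Summable fun n : ℤ =>
      Complex.exp ((-π ^ 2 / c * n ^ 2 : ℝ)) * Complex.exp ((2 * π * x * n : ℝ) * Complex.I) := by
    refine Summable.of_norm ((summable_exp_neg_mul_sub_sq (by positivity : 0 < π ^ 2 / c) 0).congr
      fun n => ?_)
    rw [norm_mul, Complex.norm_exp_ofReal_mul_I, mul_one, Complex.norm_exp_ofReal]
    ring_nf
  have hre := congrArg Complex.re key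
  simp_rw [Complex.re_tsum hsum, ← Complex.ofReal_exp, Complex.re_ofReal_mul,
    Complex.exp_ofReal_mul_I_re, ← Complex.ofReal_one, ← Complex.ofReal_div, ← Complex.ofReal_mul,
    Complex.ofReal_re] at hre
  have htheta : thetaCos (exp (-π ^ 2 / c)) (2 * π * x)
      = ∑' n : ℤ, exp (-π ^ 2 / c * n ^ 2) * cos (2 * π * x * n) :=
    tsum_congr fun n => by rw [exp_mul_intCast_sq, mul_comm (n : ℝ)]
  rw [htheta, hre, ← mul_assoc, mul_one_div_cancel (by positivity), one_mul]

lemma thetaCos_pos (hR₀ : 0 < R) (hR₁ : R < 1) (θ : ℝ) : 0 < thetaCos R θ := by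
  have hlog : log R < 0 := log_neg hR₀ hR₁
  have hc : 0 < π ^ 2 / -log R := div_pos (by positivity) (neg_pos.mpr hlog)
  have h := tsum_exp_neg_mul_sub_sq hc (θ / (2 * π))
  rw [show -π ^ 2 / (π ^ 2 / -log R) = log R by field_simp, exp_log hR₀,
    mul_div_cancel₀ θ (by positivity)] at h
  refine pos_of_mul_pos_right ?_ (sqrt_nonneg (π / (π ^ 2 / -log R)))
  rw [← h]
  exact (summable_exp_neg_mul_sub_sq hc _).tsum_pos (fun n => (exp_pos _).le) 0 (exp_pos _)

lemma jacobiFactor_pos (hR₀ : 0 < R) (hR₁ : R < 1) (θ : ℝ) (j : ℕ) : 0 < jacobiFactor R θ j := by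
  have hx : R ^ (2 * j + 1) < 1 := pow_lt_one₀ hR₀.le hR₁ (by omega)
  have hsq : R ^ (4 * j + 2) = (R ^ (2 * j + 1)) ^ 2 := by rw [← pow_mul]; ring_nf
  rw [jacobiFactor, hsq]
  nlinarith [neg_one_le_cos θ, pow_pos hR₀ (2 * j + 1)]

lemma jacobiFactor_strictAntiOn (hR₀ : 0 < R) (j : ℕ) :
    StrictAntiOn (fun θ => jacobiFactor R θ j) (Set.Icc 0 π) := fun θ₁ h₁ θ₂ h₂ h => by
  have := strictAntiOn_cos h₁ h₂ h
  simp only [jacobiFactor]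
  nlinarith [pow_pos hR₀ (2 * j + 1)]

/-- In the limit only a non-strict inequality survives, so the strictly decreasing factor `j = 0`
is kept apart. -/
lemma thetaCos_mul_jacobiFactor_zero_le (hR₀ : 0 < R) (hR₁ : R < 1) {θ₁ θ₂ : ℝ}
    (h₁ : θ₁ ∈ Set.Icc 0 π) (h₂ : θ₂ ∈ Set.Icc 0 π) (h : θ₁ ≤ θ₂) :
    thetaCos R θ₂ * jacobiFactor R θ₁ 0 ≤ thetaCos R θ₁ * jacobiFactor R θ₂ 0 := by
  have hlim (θ : ℝ) := ((tendsto_prod_jacobiFactor hR₀ hR₁ θ).comp (tendsto_add_atTop_nat 1))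
  have hle (N : ℕ) : (∏ j ∈ Finset.range (N + 1), jacobiFactor R θ₂ j) * jacobiFactor R θ₁ 0
      ≤ (∏ j ∈ Finset.range (N + 1), jacobiFactor R θ₁ j) * jacobiFactor R θ₂ 0 := by
    simp only [Finset.prod_range_succ']
    have hprod : ∏ j ∈ Finset.range N, jacobiFactor R θ₂ (j + 1)
        ≤ ∏ j ∈ Finset.range N, jacobiFactor R θ₁ (j + 1) :=
      Finset.prod_le_prod (fun j _ => (jacobiFactor_pos hR₀ hR₁ _ _).le)
        fun j _ => (jacobiFactor_strictAntiOn hR₀ (j + 1)).antitoneOn h₁ h₂ h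
    have := mul_le_mul_of_nonneg_right hprod
      (mul_pos (jacobiFactor_pos hR₀ hR₁ θ₂ 0) (jacobiFactor_pos hR₀ hR₁ θ₁ 0)).le
    linarith
  have hL := qPochLim_pos hR₀ hR₁
  have := le_of_tendsto_of_tendsto' ((hlim θ₂).mul_const _) ((hlim θ₁).mul_const _) hle
  rwa [div_mul_eq_mul_div, div_mul_eq_mul_div, div_le_div_iff_of_pos_right hL] at this

theorem thetaCos_strictAntiOn (hR₀ : 0 < R) (hR₁ : R < 1) :
    StrictAntiOn (thetaCos R) (Set.Icc 0 π) := fun θ₁ h₁ θ₂ h₂ h => by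
  have hf := jacobiFactor_strictAntiOn hR₀ 0 h₁ h₂ h
  have := thetaCos_mul_jacobiFactor_zero_le hR₀ hR₁ h₁ h₂ h.le
  have := mul_lt_mul_of_pos_left hf (thetaCos_pos hR₀ hR₁ θ₁)
  exact lt_of_mul_lt_mul_right (by linarith) (jacobiFactor_pos hR₀ hR₁ θ₁ 0).le

lemma intCast_mul_add_one_div_two (m : ℤ) : ((m * (m + 1) / 2 : ℤ) : ℝ) = m * (m + 1) / 2 := by
  rw [Int.cast_div_charZero (Int.even_mul_succ_self m).two_dvd]
  push_cast
  ring

lemma zpow_eq_exp_log_mul {a : ℝ} (ha : 0 < a) (e : ℤ) : a ^ e = exp (log a * e) := by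
  rw [← rpow_intCast, rpow_def_of_pos ha]

lemma ramF_pow_eq_tsum_exp {q : ℝ} (hq : 0 < q) {n k : ℕ} (hn : n ≠ 0) (hk : 2 * k ≤ n) :
    q ^ ((k : ℝ) ^ 2 / n) * ramF (q ^ (n - 2 * k)) (q ^ (n + 2 * k))
      = ∑' m : ℤ, exp (log q * n * (m - k / n) ^ 2) := by
  rw [ramF, ← tsum_mul_left]
  refine tsum_congr fun m => ?_
  have hpred : m * (m - 1) = (m - 1) * (m - 1 + 1) := by ring
  rw [zpow_eq_exp_log_mul (by positivity), zpow_eq_exp_log_mul (by positivity),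
    rpow_def_of_pos hq, ← exp_add, ← exp_add, log_pow, log_pow, hpred,
    intCast_mul_add_one_div_two, intCast_mul_add_one_div_two, Nat.cast_sub hk]
  congr 1
  push_cast
  field_simp
  ring

end RamanujanTheta

open RamanujanTheta in
theorem u_k_strict_anti_general (n : ℕ) (hn : 3 < n) (q : ℝ)
    (hq0 : 0 < q) (hq1 : q < 1) (u : ℕ → ℝ)
    (hu : ∀ k ≤ (n - 1) / 2,
      u k = q ^ ((k : ℝ) ^ 2 / n) * ramF (q ^ (n - 2 * k)) (q ^ (n + 2 * k))) :
    (∀ k, k < (n - 1) / 2 → u (k + 1) < u k) ∧ 0 < u ((n - 1) / 2) := by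
  have hn₀ : (0 : ℝ) < n := by exact_mod_cast (by omega : 0 < n)
  set c := -(log q * n)
  have hc : 0 < c := neg_pos.mpr (mul_neg_of_neg_of_pos (log_neg hq0 hq1) hn₀)
  set R := exp (-π ^ 2 / c)
  have hR₀ : 0 < R := exp_pos _
  have hR₁ : R < 1 :=
    Real.exp_lt_one_iff.mpr (div_neg_of_neg_of_pos (neg_neg_of_pos (by positivity)) hc)
  have hu' (k : ℕ) (hk : k ≤ (n - 1) / 2) : u k = √(π / c) * thetaCos R (2 * π * (k / n)) := by
    rw [hu k hk, ramF_pow_eq_tsum_exp hq0 (by omega) (by omega), ← tsum_exp_neg_mul_sub_sq hc,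
      neg_neg]
  have hmem (k : ℕ) (hk : k ≤ (n - 1) / 2) : 2 * π * (k / n) ∈ Set.Icc 0 π := by
    refine ⟨by positivity, ?_⟩
    have : (k : ℝ) / n ≤ 1 / 2 := by
      rw [div_le_iff₀ hn₀, one_div_mul_eq_div, le_div_iff₀ two_pos]
      exact_mod_cast (by omega : k * 2 ≤ n)
    nlinarith [pi_pos]
  refine ⟨fun k hk => ?_, ?_⟩
  · rw [hu' k (by omega), hu' (k + 1) (by omega)]
    refine mul_lt_mul_of_pos_left (thetaCos_strictAntiOn hR₀ hR₁ (hmem k (by omega))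
      (hmem (k + 1) (by omega)) ?_) (sqrt_pos.mpr (by positivity))
    gcongr
    simp
  · rw [hu' _ le_rfl]
    exact mul_pos (sqrt_pos.mpr (by positivity)) (thetaCos_pos hR₀ hR₁ _)

theorem u_k_strict_anti (n : ℕ) (hn : 3 < n) (hodd : Odd n) (q : ℝ)
    (hq0 : 0 < q) (hq1 : q < 1) (u : ℕ → ℝ)
    (hu : ∀ k ≤ (n - 1) / 2,
      u k = q ^ ((k : ℝ) ^ 2 / n) * ramF (q ^ (n - 2 * k)) (q ^ (n + 2 * k))) :
    (∀ k, k < (n - 1) / 2 → u (k + 1) < u k) ∧ 0 < u ((n - 1) / 2) :=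
  u_k_strict_anti_general n hn q hq0 hq1 u hu
end

section
/- For 0 < q < 1, define u := 2q^{1/7} f(q⁵, q⁹)/φ(q⁷), v := 2q^{4/7} f(q³, q¹¹)/φ(q⁷), and w := 2q^{9/7} f(q, q¹³)/φ(q⁷). Then 2 > u > v > w > 0. -/
open Real

/-- Ramanujan's theta function `φ(q) = ∑_{n ∈ ℤ} q^(n²)`. -/
noncomputable def phi (q : ℝ) : ℝ := ∑' n : ℤ, q ^ (n ^ 2)

/-!
With `q = exp (-T / 7)` and `G T x = ∑ₙ exp (-T (n + x)²)`, completing the square gives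
`u, v, w = 2 G(1/7) / G(0), 2 G(2/7) / G(0), 2 G(3/7) / G(0)`, so the claim is
`G(0) > G(1/7) > G(2/7) > G(3/7) > 0`. For small `T` the Poisson summation formula
`G T x = √(π/T) ∑ₙ exp (-π² n² / T) cos (2π n x)` shows that each difference is dominated by
its `n = ±1` terms, which are positive because `cos` decreases on `[0, π]`. For large `T` the
direct sum is dominated by its term of smallest exponent, `n = 0`.
-/

noncomputable def periodizedGaussian (T x : ℝ) : ℝ := ∑' n : ℤ, exp (-T * (n + x) ^ 2)

theorem summable_exp_neg_mul_int_add_sq {T : ℝ} (hT : 0 < T) (x : ℝ) :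
    Summable fun n : ℤ ↦ exp (-T * (n + x) ^ 2) := by
  convert HurwitzKernelBounds.summable_f_int 0 x (div_pos hT pi_pos) using 2 with n
  simp only [HurwitzKernelBounds.f_int, pow_zero, one_mul]
  congr 1
  field_simp

theorem summable_exp_neg_mul_int_sq_mul {a C : ℝ} (ha : 0 < a) {g : ℤ → ℝ}
    (hg : ∀ n, |g n| ≤ C) : Summable fun n : ℤ ↦ exp (-a * n ^ 2) * g n := by
  refine .of_norm_bounded ((summable_exp_neg_mul_int_add_sq ha 0).mul_left C) fun n ↦ ?_
  rw [norm_mul, norm_of_nonneg (exp_pos _).le, norm_eq_abs, add_zero, mul_comm C]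
  exact mul_le_mul_of_nonneg_left (hg n) (exp_pos _).le

theorem periodizedGaussian_pos {T : ℝ} (hT : 0 < T) (x : ℝ) : 0 < periodizedGaussian T x :=
  (summable_exp_neg_mul_int_add_sq hT x).tsum_pos (fun _ ↦ (exp_pos _).le) 0 (exp_pos _)

theorem periodizedGaussian_neg (T x : ℝ) :
    periodizedGaussian T (-x) = periodizedGaussian T x := by
  unfold periodizedGaussian
  rw [← (Equiv.neg ℤ).tsum_eq]
  congr! 2 with n
  push_cast [Equiv.neg_apply]
  rw [← neg_add, neg_sq]

theorem phi_pow_eq {q : ℝ} (hq : 0 < q) (N : ℕ) :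
    phi (q ^ N) = periodizedGaussian (-(N * log q)) 0 := by
  rw [phi, periodizedGaussian]
  congr 1 with n
  rw [← rpow_intCast, ← rpow_natCast, ← rpow_mul hq.le, rpow_def_of_pos hq]
  push_cast
  ring_nf

theorem rpow_mul_ramF_pow_eq {q N k : ℝ} (hq : 0 < q) (hN : N ≠ 0) {a b : ℕ}
    (ha : (a : ℝ) = N - 2 * k) (hb : (b : ℝ) = N + 2 * k) :
    q ^ (k ^ 2 / N) * ramF (q ^ a) (q ^ b) = periodizedGaussian (-(N * log q)) (k / N) := by
  rw [← periodizedGaussian_neg, ramF, periodizedGaussian, ← tsum_mul_left]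
  congr 1 with m
  have hdiv (z : ℤ) (hz : 2 ∣ z) : ((z / 2 : ℤ) : ℝ) = z / 2 := Int.cast_div hz (by norm_num)
  rw [← rpow_intCast, ← rpow_intCast, hdiv _ (Int.even_mul_succ_self m).two_dvd,
    hdiv _ (Int.even_mul_pred_self m).two_dvd, ← rpow_natCast q a, ← rpow_natCast q b,
    ← rpow_mul hq.le, ← rpow_mul hq.le, ← rpow_add hq, ← rpow_add hq, rpow_def_of_pos hq]
  congr 1
  push_cast
  rw [ha, hb]
  field_simp
  ring

theorem periodizedGaussian_eq_tsum_cos {T : ℝ} (hT : 0 < T) (x : ℝ) :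
    periodizedGaussian T x =
      √(π / T) * ∑' n : ℤ, exp (-(π ^ 2 / T) * n ^ 2) * cos (2 * π * n * x) := by
  have hπT : 0 < π / T := by positivity
  have key := Complex.tsum_exp_neg_quadratic (a := (π / T : ℝ)) (by simpa using hπT)
    (Complex.I * x)
  have hL : ∀ n : ℤ, Complex.exp (-π * ((π / T : ℝ) : ℂ) * n ^ 2 + 2 * π * (Complex.I * x) * n)
      = exp (-(π ^ 2 / T) * n ^ 2) * Complex.exp ((2 * π * n * x : ℝ) * Complex.I) := by
    intro n
    rw [Complex.ofReal_exp, ← Complex.exp_add]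
    push_cast
    ring_nf
  have hR : ∀ n : ℤ, Complex.exp (-π / ((π / T : ℝ) : ℂ) * (n + Complex.I * (Complex.I * x)) ^ 2)
      = exp (-T * (n + -x) ^ 2) := by
    intro n
    rw [Complex.ofReal_exp, ← mul_assoc, Complex.I_mul_I]
    push_cast
    field_simp
  have hsqrt : ((π / T : ℝ) : ℂ) ^ (1 / 2 : ℂ) = (√(π / T) : ℝ) := by
    rw [sqrt_eq_rpow, Complex.ofReal_cpow hπT.le]
    norm_num
  have hsum : Summable fun n : ℤ ↦
      (exp (-(π ^ 2 / T) * n ^ 2) : ℂ) * Complex.exp ((2 * π * n * x : ℝ) * Complex.I) := by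
    refine .of_norm ?_
    convert summable_exp_neg_mul_int_add_sq (div_pos (pow_pos pi_pos 2) hT) 0 using 2 with n
    rw [norm_mul, Complex.norm_exp_ofReal_mul_I, Complex.norm_real, norm_of_nonneg (exp_pos _).le,
      mul_one, add_zero]
  rw [tsum_congr hL, tsum_congr hR, hsqrt, ← Complex.ofReal_tsum, ← periodizedGaussian,
    periodizedGaussian_neg] at key
  have hs : (√(π / T) : ℂ) ≠ 0 := Complex.ofReal_ne_zero.2 (sqrt_pos.2 hπT).ne'
  have hG : (periodizedGaussian T x : ℂ) = √(π / T) * ∑' n : ℤ,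
      (exp (-(π ^ 2 / T) * n ^ 2) : ℂ) * Complex.exp ((2 * π * n * x : ℝ) * Complex.I) := by
    rw [key]
    field_simp
  simpa only [Complex.re_ofReal_mul, Complex.ofReal_re, Complex.re_tsum hsum,
    Complex.exp_ofReal_mul_I_re] using congrArg Complex.re hG

/-- The constant `2 / 7` is `2 ∑_{n ≥ 1} (1/8)ⁿ`: for `a ≥ 1` the terms with `|n| ≥ 2` are at
most `2 exp (-a) exp (-3)^(|n| - 1)`. -/
theorem tsum_exp_neg_mul_int_sq_mul_pos {a : ℝ} (ha : 1 ≤ a) {g : ℤ → ℝ} (hg : g.Even)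
    (hg0 : g 0 = 0) (hbdd : ∀ n, |g n| ≤ 2) (hg1 : 2 / 7 < g 1) :
    0 < ∑' n : ℤ, exp (-a * n ^ 2) * g n := by
  set f : ℤ → ℝ := fun n ↦ exp (-a * n ^ 2) * g n
  have hsum : Summable f := summable_exp_neg_mul_int_sq_mul (by linarith) hbdd
  have hsum_succ : Summable fun n : ℕ ↦ f ↑(n + 1) :=
    (summable_nat_add_iff 1).2 (hsum.comp_injective Nat.cast_injective)
  have hsum_tail : Summable fun n : ℕ ↦ f (n + 2) :=
    (summable_nat_add_iff 2).2 (hsum.comp_injective Nat.cast_injective)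
  have hsplit : ∑' n : ℤ, f n = 2 * (f 1 + ∑' n : ℕ, f (n + 2)) := by
    have hf : f.Even := fun n ↦ by simp only [f, Int.cast_neg, neg_sq, hg n]
    have hf0 : f 0 = 0 := by simp [f, hg0]
    rw [tsum_int_eq_zero_add_two_mul_tsum_pnat hf hsum, tsum_pnat_eq_tsum_succ (f := fun n ↦ f n),
      hsum_succ.tsum_eq_zero_add]
    push_cast [hf0, nsmul_eq_mul, add_assoc, one_add_one_eq_two]
    ring
  have hr : exp (-3) ≤ 1 / 8 := by
    calc exp (-3) = exp (-1) ^ 3 := by rw [← exp_nat_mul]; norm_num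
      _ ≤ (1 / 2) ^ 3 := by gcongr; exact exp_neg_one_lt_half.le
      _ = 1 / 8 := by norm_num
  set r := exp (-3)
  have hr0 : 0 ≤ r := (exp_pos _).le
  have htail : ∀ n : ℕ, -(2 * exp (-a) * r * r ^ n) ≤ f (n + 2) := by
    intro n
    have hexp : exp (-a * ((n : ℝ) + 2) ^ 2) ≤ exp (-a) * r * r ^ n := by
      simp only [r, ← exp_nat_mul, ← exp_add]
      gcongr
      nlinarith [mul_le_mul_of_nonneg_right ha (by positivity : (0 : ℝ) ≤ (n + 1) * (n + 3))]
    have hgn := neg_le_of_abs_le (hbdd (n + 2))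
    simp only [f]
    push_cast
    nlinarith [exp_pos (-a * ((n : ℝ) + 2) ^ 2)]
  have hlower := Summable.tsum_le_tsum htail
    ((summable_geometric_of_lt_one hr0 (by linarith)).mul_left _).neg hsum_tail
  have hgeom : ∑' n : ℕ, 2 * exp (-a) * r * r ^ n ≤ 2 / 7 * exp (-a) := by
    rw [tsum_mul_left, tsum_geometric_of_lt_one hr0 (by linarith)]
    have hinv : (1 - r)⁻¹ ≤ 8 / 7 := by
      rw [inv_le_comm₀ (by linarith) (by norm_num)]
      linarith
    have := inv_nonneg.2 (by linarith : 0 ≤ 1 - r)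
    calc 2 * exp (-a) * r * (1 - r)⁻¹ ≤ 2 * exp (-a) * (1 / 8) * (8 / 7) := by gcongr
      _ = 2 / 7 * exp (-a) := by ring
  have hf1 : f 1 = exp (-a) * g 1 := by simp [f]
  rw [tsum_neg] at hlower
  rw [hsplit, hf1]
  nlinarith [exp_pos (-a)]

theorem periodizedGaussian_lt_of_le_pi_sq {T x y : ℝ} (hT : 0 < T) (hTπ : T ≤ π ^ 2)
    (hxy : 2 / 7 < cos (2 * π * x) - cos (2 * π * y)) :
    periodizedGaussian T y < periodizedGaussian T x := by
  have ha : 0 < π ^ 2 / T := by positivity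
  have hcos : ∀ z : ℝ, ∀ n : ℤ, |cos (2 * π * n * z)| ≤ 1 := fun _ _ ↦ abs_cos_le_one _
  rw [← sub_pos, periodizedGaussian_eq_tsum_cos hT, periodizedGaussian_eq_tsum_cos hT, ← mul_sub,
    ← Summable.tsum_sub (summable_exp_neg_mul_int_sq_mul ha (hcos x))
      (summable_exp_neg_mul_int_sq_mul ha (hcos y))]
  refine mul_pos (sqrt_pos.2 (by positivity)) ?_
  simp_rw [← mul_sub]
  refine tsum_exp_neg_mul_int_sq_mul_pos ((one_le_div hT).2 hTπ) (fun n ↦ ?_) (by simp)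
    (fun n ↦ ?_) (by simpa using hxy)
  · simp only [Int.cast_neg, mul_neg, neg_mul, cos_neg]
  · exact (abs_sub _ _).trans (by linarith [hcos x n, hcos y n])

theorem sub_le_periodizedGaussian_sub {T x y : ℝ} (hT : 0 < T) (hx : 0 ≤ x) (hxy : x ≤ y)
    (hy : y ≤ 1) :
    exp (-T * x ^ 2) - exp (-T * y ^ 2) - exp (-T * (1 - y) ^ 2) / (1 - exp (-T)) ≤
      periodizedGaussian T x - periodizedGaussian T y := by
  set d : ℤ → ℝ := fun n ↦ exp (-T * (n + x) ^ 2) - exp (-T * (n + y) ^ 2)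
  have hd : Summable d :=
    (summable_exp_neg_mul_int_add_sq hT x).sub (summable_exp_neg_mul_int_add_sq hT y)
  have hd_nat : Summable fun n : ℕ ↦ d n := hd.comp_injective Nat.cast_injective
  have hd_neg : Summable fun n : ℕ ↦ d (-(n + 1)) :=
    hd.comp_injective fun m n h ↦ by simpa using h
  have hs0 : 0 ≤ exp (-T) := (exp_pos _).le
  have hs1 : exp (-T) < 1 := exp_lt_one_iff.2 (by linarith)
  have h0 : d 0 ≤ ∑' n : ℕ, d n := by
    refine hd_nat.le_tsum 0 fun n _ ↦ ?_
    have hsq : ((n : ℝ) + x) ^ 2 ≤ (n + y) ^ 2 := by gcongr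
    simp only [d, sub_nonneg, Int.cast_natCast, exp_le_exp]
    nlinarith [mul_le_mul_of_nonneg_left hsq hT.le]
  have htail : ∀ n : ℕ, -(exp (-T * (1 - y) ^ 2) * exp (-T) ^ n) ≤ d (-(n + 1)) := by
    intro n
    have hn : (n : ℝ) ≤ n ^ 2 := by exact_mod_cast Nat.le_self_pow two_ne_zero n
    have hexp : exp (-T * (-(n + 1 : ℝ) + y) ^ 2) ≤ exp (-T * (1 - y) ^ 2) * exp (-T) ^ n := by
      rw [← exp_nat_mul, ← exp_add]
      gcongr
      nlinarith [mul_nonneg hT.le (by nlinarith : (0 : ℝ) ≤ n * (n + 1 - 2 * y))]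
    simp only [d]
    push_cast
    linarith [exp_pos (-T * (-(n + 1 : ℝ) + x) ^ 2)]
  have hlower := Summable.tsum_le_tsum htail
    ((summable_geometric_of_lt_one hs0 hs1).mul_left _).neg hd_neg
  rw [tsum_neg, tsum_mul_left, tsum_geometric_of_lt_one hs0 hs1] at hlower
  rw [periodizedGaussian, periodizedGaussian, ← Summable.tsum_sub
    (summable_exp_neg_mul_int_add_sq hT x) (summable_exp_neg_mul_int_add_sq hT y)]
  change _ ≤ ∑' n, d n
  rw [tsum_of_nat_of_neg_add_one hd_nat hd_neg]
  simp only [d, Int.cast_zero, zero_add] at h0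
  rw [div_eq_mul_inv]
  linarith

theorem exp_neg_mul_le_inv {T c : ℝ} (hT : 9 ≤ T) (hc : 0 ≤ c) :
    exp (-T * c) ≤ (1 + 9 * c)⁻¹ := by
  calc exp (-T * c) ≤ exp (-(9 * c)) := exp_le_exp.2 (by nlinarith)
    _ = (exp (9 * c))⁻¹ := exp_neg _
    _ ≤ (1 + 9 * c)⁻¹ := by gcongr; linarith [add_one_le_exp (9 * c)]

/-- The hypothesis is the conclusion at `T = 9` with each `exp (-t)` replaced by `1 / (1 + t)`. -/
theorem exp_sub_exp_sub_tail_pos {T x y : ℝ} (hT : 9 ≤ T) (hxy : x ^ 2 ≤ y ^ 2)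
    (hy : x ^ 2 ≤ (1 - y) ^ 2)
    (h : (1 + 9 * ((1 - y) ^ 2 - x ^ 2))⁻¹ < 9 / 10 * (1 - (1 + 9 * (y ^ 2 - x ^ 2))⁻¹)) :
    0 < exp (-T * x ^ 2) - exp (-T * y ^ 2) - exp (-T * (1 - y) ^ 2) / (1 - exp (-T)) := by
  have hE0 : exp (-T) ≤ 1 / 10 := by
    convert exp_neg_mul_le_inv hT zero_le_one using 1 <;> norm_num
  have hE1 := exp_neg_mul_le_inv hT (sub_nonneg.2 hxy)
  have hE2 := exp_neg_mul_le_inv hT (sub_nonneg.2 hy)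
  have hA := exp_pos (-T * x ^ 2)
  have hsplit : ∀ z : ℝ, exp (-T * (x ^ 2 + z)) = exp (-T * x ^ 2) * exp (-T * z) := fun z ↦ by
    rw [← exp_add]; ring_nf
  rw [show y ^ 2 = x ^ 2 + (y ^ 2 - x ^ 2) by ring,
    show (1 - y) ^ 2 = x ^ 2 + ((1 - y) ^ 2 - x ^ 2) by ring, hsplit, hsplit,
    sub_sub, sub_pos]
  have hI1 : (1 + 9 * (y ^ 2 - x ^ 2))⁻¹ ≤ 1 := inv_le_one_of_one_le₀ (by linarith)
  have hratio : exp (-T * ((1 - y) ^ 2 - x ^ 2)) <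
      (1 - exp (-T)) * (1 - exp (-T * (y ^ 2 - x ^ 2))) := by
    nlinarith [mul_le_mul (by linarith : 9 / 10 ≤ 1 - exp (-T))
      (by linarith : 1 - (1 + 9 * (y ^ 2 - x ^ 2))⁻¹ ≤ 1 - exp (-T * (y ^ 2 - x ^ 2)))
      (by linarith) (by linarith)]
  rw [mul_div_assoc, ← mul_add, mul_lt_iff_lt_one_right hA, ← lt_sub_iff_add_lt',
    div_lt_iff₀ (by linarith)]
  linarith

theorem two_sevenths_lt_cos_sub_cos {k : ℕ} (hk : k < 3) :
    2 / 7 < cos (2 * π * (k / 7)) - cos (2 * π * ((k + 1) / 7)) := by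
  have hπ := pi_pos
  have h0 : cos (2 * π * (1 / 7)) < √2 / 2 := by
    rw [← cos_pi_div_four]
    exact cos_lt_cos_of_nonneg_of_le_pi (by positivity) (by linarith) (by linarith)
  have h1 : 1 / 2 < cos (2 * π * (1 / 7)) := by
    rw [← cos_pi_div_three]
    exact cos_lt_cos_of_nonneg_of_le_pi (by positivity) (by linarith) (by linarith)
  have h2 : cos (2 * π * (2 / 7)) < 0 := by
    rw [← cos_pi_div_two]
    exact cos_lt_cos_of_nonneg_of_le_pi (by positivity) (by linarith) (by linarith)
  have h3 : -(1 / 2) < cos (2 * π * (2 / 7)) := by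
    rw [← cos_pi_div_three, ← cos_pi_sub]
    exact cos_lt_cos_of_nonneg_of_le_pi (by positivity) (by linarith) (by linarith)
  have h4 : cos (2 * π * (3 / 7)) < -(√3 / 2) := by
    rw [← cos_pi_div_six, ← cos_pi_sub]
    exact cos_lt_cos_of_nonneg_of_le_pi (by linarith) (by linarith) (by linarith)
  have h5 : √2 < 10 / 7 := by
    rw [sqrt_lt' (by norm_num)]
    norm_num
  have h6 : 11 / 7 < √3 := by
    rw [lt_sqrt (by norm_num)]
    norm_num
  interval_cases k <;> norm_num <;> linarith

theorem periodizedGaussian_succ_div_seven_lt {T : ℝ} (hT : 0 < T) {k : ℕ} (hk : k < 3) :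
    periodizedGaussian T ((k + 1) / 7) < periodizedGaussian T (k / 7) := by
  rcases le_or_gt T (π ^ 2) with hTπ | hTπ
  · exact periodizedGaussian_lt_of_le_pi_sq hT hTπ (two_sevenths_lt_cos_sub_cos hk)
  · have h9 : 9 ≤ T := by nlinarith [pi_gt_three]
    have hk' : (k : ℝ) ≤ 2 := by exact_mod_cast Nat.le_of_lt_succ hk
    refine sub_pos.1 ((exp_sub_exp_sub_tail_pos h9 ?_ ?_ ?_).trans_le
      (sub_le_periodizedGaussian_sub hT (by positivity) (by linarith) (by linarith)))
    · gcongr; linarith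
    · gcongr; linarith
    · interval_cases k <;> norm_num

theorem uvw_order (q u v w : ℝ) (hq0 : 0 < q) (hq1 : q < 1)
    (hu : u = 2 * q ^ ((1 : ℝ) / 7) * ramF (q ^ 5) (q ^ 9) / phi (q ^ 7))
    (hv : v = 2 * q ^ ((4 : ℝ) / 7) * ramF (q ^ 3) (q ^ 11) / phi (q ^ 7))
    (hw : w = 2 * q ^ ((9 : ℝ) / 7) * ramF q (q ^ 13) / phi (q ^ 7)) :
    2 > u ∧ u > v ∧ v > w ∧ w > 0 := by
  set T := -(7 * log q)
  have hT : 0 < T := by linarith [log_neg hq0 hq1]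
  have hG (k : ℝ) (a b : ℕ) (ha : (a : ℝ) = 7 - 2 * k) (hb : (b : ℝ) = 7 + 2 * k) :
      q ^ (k ^ 2 / 7) * ramF (q ^ a) (q ^ b) = periodizedGaussian T (k / 7) := by
    exact_mod_cast rpow_mul_ramF_pow_eq hq0 (by norm_num : (7 : ℝ) ≠ 0) ha hb
  have hphi : phi (q ^ 7) = periodizedGaussian T 0 := by exact_mod_cast phi_pow_eq hq0 7
  have h01 := periodizedGaussian_succ_div_seven_lt hT (k := 0) (by norm_num)
  have h12 := periodizedGaussian_succ_div_seven_lt hT (k := 1) (by norm_num)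
  have h23 := periodizedGaussian_succ_div_seven_lt hT (k := 2) (by norm_num)
  have h3 := periodizedGaussian_pos hT (3 / 7)
  have h0 := periodizedGaussian_pos hT 0
  norm_num at h01 h12 h23
  have hu' := hG 1 5 9 (by norm_num) (by norm_num)
  have hv' := hG 2 3 11 (by norm_num) (by norm_num)
  have hw' := hG 3 1 13 (by norm_num) (by norm_num)
  norm_num at hu' hv' hw'
  rw [hu, hv, hw, mul_assoc, mul_assoc, mul_assoc, hphi, hu', hv', hw']
  refine ⟨?_, ?_, ?_, by positivity⟩
  · rw [gt_iff_lt, div_lt_iff₀ h0]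
    linarith
  all_goals exact div_lt_div_of_pos_right (by linarith) h0
end

section
/- For 0 < q < 1, the quantity p := u·v·w satisfies 0 < p < 8, where u := 2q^{1/7} f(q⁵, q⁹)/φ(q⁷), v := 2q^{4/7} f(q³, q¹¹)/φ(q⁷), and w := 2q^{9/7} f(q, q¹³)/φ(q⁷). -/
open Real

/-!
Put `q = e^{-7s}` and `R r = ∑_m e^{-s(7m+r)²}`. Completing the square in the exponents gives
`q^{r²/7} f(q^{7-2r}, q^{7+2r}) = R r` and `φ(q⁷) = R 0`, so `u, v, w = 2 R 1 / R 0, 2 R 2 / R 0,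
2 R 3 / R 0`. Splitting `θ(s) = ∑_n e^{-sn²}` by residues mod 7 gives `θ(s) = R 0 + 2 (R 1 + R 2 + R 3)`
with `R 0 = θ(49 s)`. Jacobi's inversion `θ(s) = √(π/s) θ(π²/s)` and the monotonicity of `θ` yield
`θ(s) < 7 θ(49 s)`, that is `R 1 + R 2 + R 3 < 3 R 0`, and AM–GM bounds `p = 8 R 1 R 2 R 3 / R 0³`.
-/

noncomputable def gaussTheta (s : ℝ) : ℝ := ∑' n : ℤ, exp (-s * n ^ 2)

noncomputable def gaussThetaResidue (s : ℝ) (N : ℕ) (r : ℤ) : ℝ :=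
  ∑' m : ℤ, exp (-s * (N * m + r) ^ 2)

lemma summable_exp_neg_mul_int_sq {s : ℝ} (hs : 0 < s) :
    Summable fun n : ℤ => exp (-s * n ^ 2) := by
  refine (summable_pow_mul_jacobiTheta₂_term_bound 0 (div_pos hs pi_pos) 0).congr fun n => ?_
  field_simp
  simp

lemma gaussTheta_strictAntiOn : StrictAntiOn gaussTheta (Set.Ioi 0) := by
  intro s hs t ht hst
  refine Summable.tsum_lt_tsum (i := 1) (fun n => ?_) ?_
    (summable_exp_neg_mul_int_sq ht) (summable_exp_neg_mul_int_sq hs)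
  · gcongr
  · simpa using hst

lemma gaussTheta_eq_sqrt_mul_gaussTheta_pi_sq_div {s : ℝ} (hs : 0 < s) :
    gaussTheta s = √(π / s) * gaussTheta (π ^ 2 / s) := by
  have h := Real.tsum_exp_neg_mul_int_sq (div_pos hs pi_pos)
  rw [← sqrt_eq_rpow, one_div, ← sqrt_inv, inv_div] at h
  unfold gaussTheta
  convert h using 3 with n n
  · field_simp
  · field_simp

lemma gaussTheta_lt_sqrt_mul_gaussTheta_mul {s c : ℝ} (hs : 0 < s) (hc : 1 < c) :
    gaussTheta s < √c * gaussTheta (c * s) := by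
  have hcs : 0 < c * s := by positivity
  have hlt : gaussTheta (π ^ 2 / s) < gaussTheta (π ^ 2 / (c * s)) :=
    gaussTheta_strictAntiOn (by simp; positivity) (by simp; positivity)
      (by gcongr; nlinarith)
  rw [gaussTheta_eq_sqrt_mul_gaussTheta_pi_sq_div hs, gaussTheta_eq_sqrt_mul_gaussTheta_pi_sq_div hcs,
    ← mul_assoc, ← sqrt_mul (by linarith), mul_div_assoc', mul_div_mul_left _ _ (by positivity)]
  gcongr

section Residue

variable {s : ℝ} {N : ℕ}

lemma summable_gaussThetaResidue (hs : 0 < s) (hN : N ≠ 0) (r : ℤ) :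
    Summable fun m : ℤ => exp (-s * (N * m + r) ^ 2) := by
  have hinj : Function.Injective fun m : ℤ => N * m + r := fun a b h => by
    simpa [hN] using h
  simpa [Function.comp_def] using (summable_exp_neg_mul_int_sq hs).comp_injective hinj

lemma gaussThetaResidue_pos (hs : 0 < s) (hN : N ≠ 0) (r : ℤ) : 0 < gaussThetaResidue s N r :=
  (summable_gaussThetaResidue hs hN r).tsum_pos (fun _ => (exp_pos _).le) 0 (exp_pos _)

lemma gaussThetaResidue_zero (s : ℝ) (N : ℕ) :
    gaussThetaResidue s N 0 = gaussTheta (N ^ 2 * s) :=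
  tsum_congr fun m => by push_cast; ring_nf

lemma gaussThetaResidue_neg (s : ℝ) (N : ℕ) (r : ℤ) :
    gaussThetaResidue s N (-r) = gaussThetaResidue s N r := by
  rw [gaussThetaResidue, ← (Equiv.neg ℤ).tsum_eq]
  exact tsum_congr fun m => by simp only [Equiv.neg_apply]; push_cast; ring_nf

lemma gaussThetaResidue_add_self (s : ℝ) (N : ℕ) (r : ℤ) :
    gaussThetaResidue s N (r + N) = gaussThetaResidue s N r := by
  rw [gaussThetaResidue, ← (Equiv.addRight (-1 : ℤ)).tsum_eq]
  exact tsum_congr fun m => by simp only [Equiv.coe_addRight]; push_cast; ring_nf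

lemma gaussThetaResidue_self_sub (s : ℝ) (N : ℕ) (r : ℤ) :
    gaussThetaResidue s N (N - r) = gaussThetaResidue s N r := by
  rw [sub_eq_neg_add, gaussThetaResidue_add_self, gaussThetaResidue_neg]

lemma gaussTheta_eq_sum_gaussThetaResidue [NeZero N] (hs : 0 < s) :
    gaussTheta s = ∑ r : Fin N, gaussThetaResidue s N r := by
  have hsum : Summable fun p : ℤ × Fin N => exp (-s * ((Int.divModEquiv N).symm p : ℝ) ^ 2) :=
    (summable_exp_neg_mul_int_sq hs).comp_injective (Int.divModEquiv N).symm.injective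
  rw [gaussTheta, ← (Int.divModEquiv N).symm.tsum_eq, hsum.tsum_prod' hsum.prod_factor]
  simp only [tsum_fintype]
  rw [Summable.tsum_finsetSum fun r _ => ?_]
  · exact Finset.sum_congr rfl fun r _ => tsum_congr fun m => by simp [mul_comm]
  · simpa [mul_comm] using summable_gaussThetaResidue hs (NeZero.ne N) r

end Residue

lemma gaussTheta_eq_gaussThetaResidue_seven {s : ℝ} (hs : 0 < s) :
    gaussTheta s = gaussThetaResidue s 7 0 +
      2 * (gaussThetaResidue s 7 1 + gaussThetaResidue s 7 2 + gaussThetaResidue s 7 3) := by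
  have h (r : ℤ) : gaussThetaResidue s 7 (7 - r) = gaussThetaResidue s 7 r :=
    mod_cast gaussThetaResidue_self_sub s 7 r
  rw [gaussTheta_eq_sum_gaussThetaResidue (N := 7) hs, Fin.sum_univ_seven]
  norm_num
  rw [← h 1, ← h 2, ← h 3]
  norm_num
  ring

lemma gaussThetaResidue_seven_add_lt {s : ℝ} (hs : 0 < s) :
    gaussThetaResidue s 7 1 + gaussThetaResidue s 7 2 + gaussThetaResidue s 7 3 <
      3 * gaussThetaResidue s 7 0 := by
  have h := gaussTheta_lt_sqrt_mul_gaussTheta_mul hs (c := 7 ^ 2) (by norm_num)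
  rw [sqrt_sq (by norm_num), gaussTheta_eq_gaussThetaResidue_seven hs] at h
  have h0 : gaussThetaResidue s 7 0 = gaussTheta (7 ^ 2 * s) := mod_cast gaussThetaResidue_zero s 7
  linarith

lemma phi_eq_gaussTheta {q : ℝ} (hq : 0 < q) : phi q = gaussTheta (-log q) :=
  tsum_congr fun n => by rw [← rpow_intCast, rpow_def_of_pos hq]; push_cast; ring_nf

lemma phi_pow_eq_gaussThetaResidue_zero {q : ℝ} (hq : 0 < q) (N : ℕ) :
    phi (q ^ N) = gaussThetaResidue (-log q / N) N 0 := by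
  rw [phi_eq_gaussTheta (pow_pos hq N), gaussThetaResidue_zero, log_pow]
  field_simp

lemma ramF_exponent_eq {N a b : ℕ} {r : ℤ} (hab : a + b = 2 * N) (hr : (b : ℤ) - a = 4 * r)
    (m : ℤ) : a * (m * (m + 1) / 2) + b * (m * (m - 1) / 2) = N * m ^ 2 - 2 * r * m := by
  have h₁ := Int.two_mul_ediv_two_of_even (Int.even_mul_succ_self m)
  have h₂ := Int.two_mul_ediv_two_of_even (Int.even_mul_pred_self m)
  have hab' : (a : ℤ) + b = 2 * N := mod_cast hab
  refine mul_left_cancel₀ two_ne_zero ?_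
  linear_combination a * h₁ + b * h₂ + m ^ 2 * hab' - m * hr

lemma rpow_mul_ramF_eq_gaussThetaResidue {q : ℝ} (hq : 0 < q) {N a b : ℕ} {r : ℤ} (hN : N ≠ 0)
    (hab : a + b = 2 * N) (hr : (b : ℤ) - a = 4 * r) :
    q ^ ((r : ℝ) ^ 2 / N) * ramF (q ^ a) (q ^ b) = gaussThetaResidue (-log q / N) N r := by
  rw [← gaussThetaResidue_neg, ramF, gaussThetaResidue, ← tsum_mul_left]
  refine tsum_congr fun m => ?_
  rw [← zpow_natCast q a, ← zpow_natCast q b, ← zpow_mul, ← zpow_mul, ← zpow_add₀ hq.ne',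
    ramF_exponent_eq hab hr, ← rpow_intCast, ← rpow_add hq, rpow_def_of_pos hq]
  push_cast
  field_simp
  ring_nf

lemma mul_mul_lt_pow_three_of_add_lt {a b c d : ℝ} (ha : 0 ≤ a) (hb : 0 ≤ b) (hc : 0 ≤ c)
    (h : a + b + c < 3 * d) : a * b * c < d ^ 3 :=
  calc a * b * c ≤ ((a + b + c) / 3) ^ 3 := by
        nlinarith [mul_nonneg ha (sq_nonneg (b - c)), mul_nonneg hb (sq_nonneg (a - c)),
          mul_nonneg hc (sq_nonneg (a - b)), mul_nonneg (add_nonneg (add_nonneg ha hb) hc)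
          (add_nonneg (add_nonneg (sq_nonneg (a - b)) (sq_nonneg (b - c))) (sq_nonneg (a - c)))]
    _ < d ^ 3 := by gcongr; linarith

theorem p_bounds (q u v w p : ℝ) (hq0 : 0 < q) (hq1 : q < 1)
    (hu : u = 2 * q ^ ((1 : ℝ) / 7) * ramF (q ^ 5) (q ^ 9) / phi (q ^ 7))
    (hv : v = 2 * q ^ ((4 : ℝ) / 7) * ramF (q ^ 3) (q ^ 11) / phi (q ^ 7))
    (hw : w = 2 * q ^ ((9 : ℝ) / 7) * ramF q (q ^ 13) / phi (q ^ 7))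
    (hp : p = u * v * w) :
    0 < p ∧ p < 8 := by
  have hs : 0 < -log q / 7 := div_pos (neg_pos.2 (log_neg hq0 hq1)) (by norm_num)
  have hsum := gaussThetaResidue_seven_add_lt hs
  have hphi : phi (q ^ 7) = gaussThetaResidue (-log q / 7) 7 0 :=
    mod_cast phi_pow_eq_gaussThetaResidue_zero hq0 7
  have hR₁ : q ^ ((1 : ℝ) / 7) * ramF (q ^ 5) (q ^ 9) = gaussThetaResidue (-log q / 7) 7 1 := by
    convert rpow_mul_ramF_eq_gaussThetaResidue hq0 (N := 7) (a := 5) (b := 9) (r := 1)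
      (by norm_num) (by norm_num) (by norm_num) using 3 <;> norm_num
  have hR₂ : q ^ ((4 : ℝ) / 7) * ramF (q ^ 3) (q ^ 11) = gaussThetaResidue (-log q / 7) 7 2 := by
    convert rpow_mul_ramF_eq_gaussThetaResidue hq0 (N := 7) (a := 3) (b := 11) (r := 2)
      (by norm_num) (by norm_num) (by norm_num) using 3 <;> norm_num
  have hR₃ : q ^ ((9 : ℝ) / 7) * ramF q (q ^ 13) = gaussThetaResidue (-log q / 7) 7 3 := by
    convert rpow_mul_ramF_eq_gaussThetaResidue hq0 (N := 7) (a := 1) (b := 13) (r := 3)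
      (by norm_num) (by norm_num) (by norm_num) using 3 <;> norm_num
  set R := gaussThetaResidue (-log q / 7) 7
  have hR (r : ℤ) : 0 < R r := gaussThetaResidue_pos hs (by norm_num) r
  have hp' : p = 8 * (R 1 * R 2 * R 3) / R 0 ^ 3 := by
    rw [hp, hu, hv, hw, hphi, ← hR₁, ← hR₂, ← hR₃]
    ring
  have hlt : R 1 * R 2 * R 3 < R 0 ^ 3 :=
    mul_mul_lt_pow_three_of_add_lt (hR 1).le (hR 2).le (hR 3).le hsum
  have hpos : 0 < R 1 * R 2 * R 3 := mul_pos (mul_pos (hR 1) (hR 2)) (hR 3)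
  rw [hp', div_lt_iff₀ (pow_pos (hR 0) 3), lt_div_iff₀ (pow_pos (hR 0) 3)]
  constructor <;> linarith
end

section
/- One has (cos(π/7)/(2cos²(2π/7)))² + (cos(2π/7)/(2cos²(3π/7)))² + (cos(3π/7)/(2cos²(π/7)))² = 41. -/
/-! With σ(r) = 1 - 2r², the double-angle formula gives σ(cos(π/7)) = -cos(2π/7),
σ(-cos(2π/7)) = cos(3π/7) and σ(cos(3π/7)) = cos(π/7), so the three summands are
(r/(2σ(r)²))² for r running over this σ-orbit. Since cos 4θ = -cos 3θ at θ = π/7, the orbit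
consists of roots of p = 8X³ - 4X² - 4X + 1, and p(r) = 2σ(r)(1 - 2r) - 1 makes 1/σ(r) = 2(1 - 2r)
a polynomial in r. Each summand thus reduces modulo p to 32r² - 34r + 6, and the orbit has sum
1/2 and sum of squares (3 - 1/2)/2, giving 32 · 5/4 - 34 · 1/2 + 18 = 41. -/

open Real

lemma inv_one_sub_two_mul_sq_of_cubic {r : ℝ} (hr : 8 * r ^ 3 - 4 * r ^ 2 - 4 * r + 1 = 0) :
    (1 - 2 * r ^ 2)⁻¹ = 2 * (1 - 2 * r) :=
  inv_eq_of_mul_eq_one_right (by linear_combination hr)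

lemma cubic_one_sub_two_mul_sq {r : ℝ} (hr : 8 * r ^ 3 - 4 * r ^ 2 - 4 * r + 1 = 0) :
    8 * (1 - 2 * r ^ 2) ^ 3 - 4 * (1 - 2 * r ^ 2) ^ 2 - 4 * (1 - 2 * r ^ 2) + 1 = 0 := by
  linear_combination (-8 * r ^ 3 - 4 * r ^ 2 + 4 * r + 1) * hr

lemma sq_div_two_mul_sq_of_cubic {r s : ℝ} (hr : 8 * r ^ 3 - 4 * r ^ 2 - 4 * r + 1 = 0)
    (hs : s = 1 - 2 * r ^ 2) :
    (r / (2 * s ^ 2)) ^ 2 = 32 * r ^ 2 - 34 * r + 6 := by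
  have hpoly : r / (2 * s ^ 2) = 2 * r * (1 - 2 * r) ^ 2 := by
    rw [hs, div_eq_mul_inv, mul_inv, ← inv_pow, inv_one_sub_two_mul_sq_of_cubic hr]
    ring
  rw [hpoly]
  linear_combination (8 * r ^ 3 - 12 * r ^ 2 + 10 * r - 6) * hr

theorem sum_sq_div_two_mul_sq_of_cubic {x y z : ℝ}
    (hx : 8 * x ^ 3 - 4 * x ^ 2 - 4 * x + 1 = 0)
    (hy : y = 1 - 2 * x ^ 2) (hz : z = 1 - 2 * y ^ 2) (hx' : x = 1 - 2 * z ^ 2) :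
    (x / (2 * y ^ 2)) ^ 2 + (y / (2 * z ^ 2)) ^ 2 + (z / (2 * x ^ 2)) ^ 2 = 41 := by
  have hy_root : 8 * y ^ 3 - 4 * y ^ 2 - 4 * y + 1 = 0 := hy ▸ cubic_one_sub_two_mul_sq hx
  have hz_root : 8 * z ^ 3 - 4 * z ^ 2 - 4 * z + 1 = 0 := hz ▸ cubic_one_sub_two_mul_sq hy_root
  have hsum : x + y + z = 1 / 2 := by
    rw [hz, hy]
    linear_combination (-x - 1 / 2) * hx
  rw [sq_div_two_mul_sq_of_cubic hx hy, sq_div_two_mul_sq_of_cubic hy_root hz,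
    sq_div_two_mul_sq_of_cubic hz_root hx']
  linear_combination -50 * hsum + 16 * hy + 16 * hz + 16 * hx'

lemma cos_pi_sub_two_mul (θ : ℝ) : cos (π - 2 * θ) = 1 - 2 * cos θ ^ 2 := by
  rw [cos_pi_sub, cos_two_mul]
  ring

lemma cubic_cos_pi_div_seven :
    8 * cos (π / 7) ^ 3 - 4 * cos (π / 7) ^ 2 - 4 * cos (π / 7) + 1 = 0 := by
  set c := cos (π / 7)
  have hc : 0 < c := cos_pos_of_mem_Ioo ⟨by linarith [pi_pos], by linarith [pi_pos]⟩
  have h43 : cos (4 * (π / 7)) = -cos (3 * (π / 7)) := by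
    rw [← cos_pi_sub]
    ring_nf
  have hquartic : (c + 1) * (8 * c ^ 3 - 4 * c ^ 2 - 4 * c + 1) = 0 := by
    rw [show 4 * (π / 7) = 2 * (2 * (π / 7)) by ring, cos_two_mul, cos_two_mul,
      cos_three_mul] at h43
    linear_combination h43
  exact (mul_eq_zero.mp hquartic).resolve_left (by positivity)

theorem trig_identity_41 :
    (Real.cos (π / 7) / (2 * Real.cos (2 * π / 7) ^ 2)) ^ 2 +
      (Real.cos (2 * π / 7) / (2 * Real.cos (3 * π / 7) ^ 2)) ^ 2 +
      (Real.cos (3 * π / 7) / (2 * Real.cos (π / 7) ^ 2)) ^ 2 = 41 := by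
  have hy : -cos (2 * π / 7) = 1 - 2 * cos (π / 7) ^ 2 := by
    rw [← cos_pi_sub_two_mul, cos_pi_sub, mul_div_assoc]
  have hz : cos (3 * π / 7) = 1 - 2 * (-cos (2 * π / 7)) ^ 2 := by
    rw [neg_sq, ← cos_pi_sub_two_mul]
    ring_nf
  have hx' : cos (π / 7) = 1 - 2 * cos (3 * π / 7) ^ 2 := by
    rw [← cos_pi_sub_two_mul]
    ring_nf
  simpa only [neg_sq, neg_div] using
    sum_sq_div_two_mul_sq_of_cubic cubic_cos_pi_div_seven hy hz hx'
end
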